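/- Let λ be a point of the upper half-plane ℂ₊ and 0 < ε < 1. Every point z of the rectangle { z : √(1+ε²)/(√(1+ε²)+√2·ε) ≤ Im z / Im λ ≤ √(1+ε²)/(√(1+ε²)−√2·ε) and |Re(z−λ)|/Im λ ≤ √2·ε/√(1−ε²) } satisfies |(z−λ)/(z−conj λ)| ≤ ε; that is, the rectangle is contained in the pseudohyperbolic disk {z : |b_λ(z)| ≤ ε}, and the four vertices of the rectangle satisfy equality |(z−λ)/(z−conj λ)| = ε. -/

import Mathlib

/-! Write `b = Im λ`, `d = Re (z - λ)`, `y = Im z`, and let `κ`, `β`, `τ` be the half-width, bottom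
and top of the rectangle in units of `b`. Then
`|z - λ|² - ε² |z - conj λ|² = (1 - ε²) ((d - κ b) (d + κ b) + (y - β b) (y - τ b))`:
the horizontal and vertical parts are quadratics whose roots are the sides of the rectangle.
On the rectangle both products are `≤ 0`, and at a vertex both vanish. -/

open Complex ComplexConjugate

noncomputable def inscribedRectHalfWidth (ε : ℝ) : ℝ := √2 * ε / √(1 - ε ^ 2)

noncomputable def inscribedRectBottom (ε : ℝ) : ℝ := √(1 + ε ^ 2) / (√(1 + ε ^ 2) + √2 * ε)

noncomputable def inscribedRectTop (ε : ℝ) : ℝ := √(1 + ε ^ 2) / (√(1 + ε ^ 2) - √2 * ε)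

section
variable {ε : ℝ}

theorem one_sub_sq_mul_inscribedRectHalfWidth_sq (hε : ε ^ 2 < 1) :
    (1 - ε ^ 2) * inscribedRectHalfWidth ε ^ 2 = 2 * ε ^ 2 := by
  have hu : 0 < 1 - ε ^ 2 := by linarith
  rw [inscribedRectHalfWidth, div_pow, mul_pow, Real.sq_sqrt zero_le_two, Real.sq_sqrt hu.le]
  field_simp

theorem sq_sub_sq_eq_mul_inscribedRectHalfWidth (hε : ε ^ 2 < 1) (d b : ℝ) :
    (1 - ε ^ 2) * d ^ 2 - 2 * ε ^ 2 * b ^ 2 =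
      (1 - ε ^ 2) *
        ((d - inscribedRectHalfWidth ε * b) * (d + inscribedRectHalfWidth ε * b)) := by
  linear_combination b ^ 2 * one_sub_sq_mul_inscribedRectHalfWidth_sq hε

theorem quadratic_eq_mul_inscribedRectBottom_inscribedRectTop (hε : ε ^ 2 < 1) (y b : ℝ) :
    (1 - ε ^ 2) * y ^ 2 - 2 * (1 + ε ^ 2) * b * y + (1 + ε ^ 2) * b ^ 2 =
      (1 - ε ^ 2) * ((y - inscribedRectBottom ε * b) * (y - inscribedRectTop ε * b)) := by
  set s := √(1 + ε ^ 2)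
  set t := √2 * ε
  have hs2 : s ^ 2 = 1 + ε ^ 2 := Real.sq_sqrt (by positivity)
  have ht2 : t ^ 2 = 2 * ε ^ 2 := by rw [mul_pow, Real.sq_sqrt zero_le_two]
  have hst : (s + t) * (s - t) = 1 - ε ^ 2 := by linear_combination hs2 - ht2
  have hbot : inscribedRectBottom ε * (s + t) = s :=
    div_mul_cancel₀ _ fun h ↦ by rw [h, zero_mul] at hst; linarith
  have htop : inscribedRectTop ε * (s - t) = s :=
    div_mul_cancel₀ _ fun h ↦ by rw [h, mul_zero] at hst; linarith
  calc _ = ((s + t) * y - s * b) * ((s - t) * y - s * b) := by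
        linear_combination y ^ 2 * ht2 - (y - b) ^ 2 * hs2
    _ = ((s + t) * y - inscribedRectBottom ε * (s + t) * b) *
          ((s - t) * y - inscribedRectTop ε * (s - t) * b) := by rw [hbot, htop]
    _ = _ := by rw [← hst]; ring

theorem normSq_sub_sub_mul_normSq_sub_conj (hε : ε ^ 2 < 1) (z w : ℂ) :
    normSq (z - w) - ε ^ 2 * normSq (z - conj w) =
      (1 - ε ^ 2) * (((z - w).re - inscribedRectHalfWidth ε * w.im) *
          ((z - w).re + inscribedRectHalfWidth ε * w.im) +
        (z.im - inscribedRectBottom ε * w.im) * (z.im - inscribedRectTop ε * w.im)) := by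
  rw [mul_add, ← sq_sub_sq_eq_mul_inscribedRectHalfWidth hε,
    ← quadratic_eq_mul_inscribedRectBottom_inscribedRectTop hε]
  simp only [normSq_apply, sub_re, sub_im, conj_re, conj_im]
  ring

theorem norm_div_le_of_normSq_le {u v : ℂ} (hε : 0 ≤ ε)
    (h : normSq u ≤ ε ^ 2 * normSq v) : ‖u / v‖ ≤ ε := by
  rw [← sq_le_sq₀ (norm_nonneg _) hε, ← normSq_eq_norm_sq, normSq_div]
  rcases (normSq_nonneg v).eq_or_lt with hv | hv
  · rw [← hv, div_zero]
    positivity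
  · rwa [div_le_iff₀ hv]

theorem norm_sub_div_sub_conj_eq_of_normSq_eq {z w : ℂ} (hw : w.im ≠ 0) (hε : 0 ≤ ε)
    (h : normSq (z - w) = ε ^ 2 * normSq (z - conj w)) : ‖(z - w) / (z - conj w)‖ = ε := by
  have hv : z - conj w ≠ 0 := by
    intro hv
    rw [hv, map_zero, mul_zero, normSq_eq_zero, sub_eq_zero] at h
    rw [sub_eq_zero, h] at hv
    exact hw (conj_eq_iff_im.1 hv.symm)
  rw [← sq_eq_sq₀ (norm_nonneg _) hε, ← normSq_eq_norm_sq, normSq_div,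
    div_eq_iff (normSq_pos.2 hv).ne', h]

end

theorem rectangle_inscribed_in_pseudohyperbolic_disk
    (lam : ℂ) (hlam : 0 < lam.im) (ε : ℝ) (hε0 : 0 < ε) (hε1 : ε < 1) :
    (∀ z : ℂ,
      Real.sqrt (1 + ε ^ 2) / (Real.sqrt (1 + ε ^ 2) + Real.sqrt 2 * ε) ≤ z.im / lam.im →
      z.im / lam.im ≤ Real.sqrt (1 + ε ^ 2) / (Real.sqrt (1 + ε ^ 2) - Real.sqrt 2 * ε) →
      |(z - lam).re| / lam.im ≤ Real.sqrt 2 * ε / Real.sqrt (1 - ε ^ 2) →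
      ‖(z - lam) / (z - (starRingEnd ℂ) lam)‖ ≤ ε) ∧
    (∀ x y : ℝ,
      (x - lam.re = (Real.sqrt 2 * ε / Real.sqrt (1 - ε ^ 2)) * lam.im ∨
        x - lam.re = -((Real.sqrt 2 * ε / Real.sqrt (1 - ε ^ 2)) * lam.im)) →
      (y = (Real.sqrt (1 + ε ^ 2) / (Real.sqrt (1 + ε ^ 2) + Real.sqrt 2 * ε)) * lam.im ∨
        y = (Real.sqrt (1 + ε ^ 2) / (Real.sqrt (1 + ε ^ 2) - Real.sqrt 2 * ε)) * lam.im) →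
      ‖((x : ℂ) + (y : ℂ) * Complex.I - lam) /
        ((x : ℂ) + (y : ℂ) * Complex.I - (starRingEnd ℂ) lam)‖ = ε) := by
  rw [← inscribedRectHalfWidth, ← inscribedRectBottom, ← inscribedRectTop]
  have hε2 : ε ^ 2 < 1 := by nlinarith
  have hcoef : 0 ≤ 1 - ε ^ 2 := by linarith
  refine ⟨fun z hbot htop hwidth ↦ ?_, fun x y hx hy ↦ ?_⟩
  · rw [le_div_iff₀ hlam] at hbot
    rw [div_le_iff₀ hlam] at htop hwidth
    obtain ⟨hleft, hright⟩ := abs_le.1 hwidth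
    refine norm_div_le_of_normSq_le hε0.le (sub_nonpos.1 ?_)
    rw [normSq_sub_sub_mul_normSq_sub_conj hε2]
    refine mul_nonpos_of_nonneg_of_nonpos hcoef (add_nonpos ?_ ?_)
    · exact mul_nonpos_of_nonpos_of_nonneg (by linarith) (by linarith)
    · exact mul_nonpos_of_nonneg_of_nonpos (by linarith) (by linarith)
  · refine norm_sub_div_sub_conj_eq_of_normSq_eq hlam.ne' hε0.le (sub_eq_zero.1 ?_)
    have hre : ((x : ℂ) + y * I - lam).re = x - lam.re := by simp
    have him : ((x : ℂ) + y * I).im = y := by simp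
    have hwidth : (x - lam.re - inscribedRectHalfWidth ε * lam.im) *
        (x - lam.re + inscribedRectHalfWidth ε * lam.im) = 0 := by
      rcases hx with hx | hx <;> rw [hx] <;> ring
    have hheight :
        (y - inscribedRectBottom ε * lam.im) * (y - inscribedRectTop ε * lam.im) = 0 := by
      rcases hy with rfl | rfl <;> ring
    rw [normSq_sub_sub_mul_normSq_sub_conj hε2, hre, him, hwidth, hheight]
    ring
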